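/- arXiv:2308.00991 — 5 statements merged into one kernel-verified Lean document; each statement's English description precedes it below -/
import Mathlib

section
/- Let w = γ_1...γ_m be an alternating string of length m ≥ 1 on (Q(n), I(n)), and define f_w : {0,...,m} → {0,...,n} by f_w(0) = s(γ_m) and f_w(j) = t(γ_{m-j+1}) for j ∈ {1,...,m}. Then f_w is strictly monotone; moreover f_w is strictly increasing if and only if f_{w*} is strictly decreasing, where w* denotes the formal inverse walk γ_m* ... γ_1*. -/
/-!  Combinatorics of walks and strings on the quiver `Q(n)` with relations `I(n)`.

`Q(n)` has vertices `0,…,n` and arrows `α i : i+1 → i` and `β i : i → i+1`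
for `0 ≤ i ≤ n-1`.  A letter is an arrow or a formal inverse of an arrow. -/

/-- A letter of a walk on `Q(n)`: an arrow `α i` or `β i`, or a formal
inverse `α i *` (`ia i`) or `β i *` (`ib i`). -/
inductive Letter where
  | a (i : ℕ)   -- the arrow `α i : i+1 → i`
  | b (i : ℕ)   -- the arrow `β i : i → i+1`
  | ia (i : ℕ)  -- the formal inverse of `α i`
  | ib (i : ℕ)  -- the formal inverse of `β i`
  deriving DecidableEq

namespace Letter

/-- The `*`-operation on letters (formal inversion). -/
def star : Letter → Letter
  | a i => ia i
  | ia i => a i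
  | b i => ib i
  | ib i => b i

/-- Source of a letter. -/
def src : Letter → ℕ
  | a i => i + 1
  | ia i => i
  | b i => i
  | ib i => i + 1

/-- Target of a letter. -/
def tgt : Letter → ℕ
  | a i => i
  | ia i => i + 1
  | b i => i + 1
  | ib i => i

/-- Whether a letter is an honest arrow of `Q(n)` (not a formal inverse). -/
def honest : Letter → Bool
  | a _ => true
  | b _ => true
  | ia _ => false
  | ib _ => false

/-- Whether a letter is a letter of the quiver `Q(n)` (arrows `α i, β i` only
exist for `i < n`). -/
def valid (n : ℕ) : Letter → Prop
  | a i => i < n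
  | b i => i < n
  | ia i => i < n
  | ib i => i < n

end Letter

open Letter

/-- A walk `γ₁γ₂…γₘ` on `Q(n)`, encoded as the list `[γ₁, …, γₘ]`:
all letters exist in `Q(n)` and `t (γ_{k+1}) = s (γ_k)` for consecutive letters. -/
def IsWalk (n : ℕ) (w : List Letter) : Prop :=
  (∀ c ∈ w, c.valid n) ∧ w.Chain' (fun c d => d.tgt = c.src)

/-- A walk is reduced if no letter is immediately followed by its formal inverse:
`γ_k ≠ γ_{k+1}*`. -/
def IsReducedWalk (w : List Letter) : Prop :=
  w.Chain' (fun c d => c ≠ d.star)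

/-- The formal inverse `w* = γₘ* … γ₁*` of a walk `w = γ₁…γₘ`. -/
def starWalk (w : List Letter) : List Letter :=
  (w.map Letter.star).reverse

/-- The source `s(w) = s(γₘ)` of a (nonempty) walk. -/
def walkSrc (w : List Letter) : ℕ := (w.getLastD (Letter.a 0)).src

/-- The function `f_w : {0,…,m} → {0,…,n}` attached to a walk `w = γ₁…γₘ`:
`f_w 0 = s(γₘ)` and `f_w j = t(γ_{m-j+1})` for `1 ≤ j ≤ m`. -/
def fW (w : List Letter) (j : ℕ) : ℕ :=
  if j = 0 then (w.getLastD (Letter.a 0)).src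
  else ((w.getD (w.length - j) (Letter.a 0))).tgt

/-- The target `t(w) = t(γ₁)` of a (nonempty) walk. -/
def walkTgt (w : List Letter) : ℕ := fW w w.length

/-- The length-two paths which are monomials appearing in the generators of the
ideal `I(n)`: `α i · α (i+1)`, `β (i+1) · β i`, `α j · β j` (coming from `α 0 β 0`
and from the binomial relations `β i α i - α (i+1) β (i+1)`, `0 ≤ i ≤ n-2`), and
`β i · α i` for `0 ≤ i ≤ n-2`.  A pair `(x, y)` stands for the path `x y`
(first traverse `y`, then `x`). -/
def ForbiddenPair (n : ℕ) (x y : Letter) : Prop :=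
  (∃ i, x = Letter.a i ∧ y = Letter.a (i + 1)) ∨
  (∃ i, x = Letter.b (i + 1) ∧ y = Letter.b i) ∨
  (∃ j, x = Letter.a j ∧ y = Letter.b j) ∨
  (∃ i, i + 2 ≤ n ∧ x = Letter.b i ∧ y = Letter.a i)

/-- A string on `(Q(n), I(n))`: a reduced walk such that no path contained in it
(i.e. no contiguous subword of `w` consisting of honest arrows, and no formal
inverse of such a subword) is a monomial appearing in a generator of `I(n)`.
Since all monomials appearing in the generators of `I(n)` have length two, this
amounts to forbidding the pairs of `ForbiddenPair` in both orientations. -/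
def IsString (n : ℕ) (w : List Letter) : Prop :=
  IsWalk n w ∧ IsReducedWalk w ∧
    ∀ x y : Letter, [x, y] <:+: w →
      ¬ ForbiddenPair n x y ∧ ¬ ForbiddenPair n y.star x.star

/-- An alternating walk: `γ_k` is an honest arrow iff `γ_{k+1}` is a formal
inverse, for all `k < m`. -/
def IsAlternating (w : List Letter) : Prop :=
  w.Chain' (fun c d => c.honest = !d.honest)

/-- A path on `Q(n)`: a walk all of whose letters are honest arrows. -/
def IsPath (n : ℕ) (p : List Letter) : Prop :=
  IsWalk n p ∧ ∀ c ∈ p, c.honest = true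

/-- The `h`-fold concatenation `w^h` of a walk with itself. -/
def powWalk (w : List Letter) (h : ℕ) : List Letter :=
  (List.replicate h w).flatten


/-! In an alternating reduced walk, consecutive letters go in the same direction: at their
common vertex one of them is an arrow and the other an inverse arrow, so turning back would
mean that the two letters cancel. Hence `f_w` moves by `+1` at every step or by `-1` at every
step. Since `w*` traverses `w` backwards, `f_{w*} j = f_w (m - j)`, which turns increasing into
decreasing. -/

namespace Letter

def ascends : Letter → Bool
  | b _ => true
  | ia _ => true
  | _ => false

@[simp] lemma src_star (c : Letter) : c.star.src = c.tgt := by cases c <;> rfl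

@[simp] lemma tgt_star (c : Letter) : c.star.tgt = c.src := by cases c <;> rfl

lemma tgt_eq_src_add_one {c : Letter} (h : c.ascends = true) : c.tgt = c.src + 1 := by
  cases c <;> simp_all [ascends, src, tgt]

lemma src_eq_tgt_add_one {c : Letter} (h : c.ascends = false) : c.src = c.tgt + 1 := by
  cases c <;> simp_all [ascends, src, tgt]

lemma ascends_eq_of_adjacent {c d : Letter} (hcomp : d.tgt = c.src) (hred : c ≠ d.star)
    (halt : c.honest = !d.honest) : c.ascends = d.ascends := by
  cases c <;> cases d <;> simp_all [tgt, src, star, honest, ascends]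

end Letter

section Walk

variable {w : List Letter}

lemma exists_forall_ascends_eq (hcomp : w.IsChain (fun c d => d.tgt = c.src))
    (hred : IsReducedWalk w) (halt : IsAlternating w) : ∃ u, ∀ c ∈ w, c.ascends = u := by
  have hchain : (w.map Letter.ascends).IsChain (· = ·) := by
    rw [List.isChain_map, List.isChain_iff_getElem]
    exact fun i h => Letter.ascends_eq_of_adjacent (List.isChain_iff_getElem.mp hcomp i h)
      (List.isChain_iff_getElem.mp hred i h) (List.isChain_iff_getElem.mp halt i h)
  rcases w with _ | ⟨c, l⟩
  · exact ⟨true, by simp⟩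
  · refine ⟨c.ascends, fun d hd => ?_⟩
    rw [List.map_cons, List.isChain_cons_eq_iff_eq_replicate] at hchain
    rcases List.mem_cons.mp hd with rfl | hd
    · rfl
    · exact List.eq_of_mem_replicate (hchain ▸ List.mem_map_of_mem hd)

/-- The step of `f_w` from `j` to `j + 1` traverses the letter `γ_{m-j} = w[m - 1 - j]`. -/
lemma fW_eq_src_and_fW_succ_eq_tgt (hcomp : w.IsChain (fun c d => d.tgt = c.src))
    {j : ℕ} (hj : j < w.length) :
    fW w j = w[w.length - 1 - j].src ∧ fW w (j + 1) = w[w.length - 1 - j].tgt := by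
  refine ⟨?_, by
    rw [fW, if_neg j.succ_ne_zero, List.getD_eq_getElem _ _ (by omega)]; congr 2; omega⟩
  rcases Nat.eq_zero_or_pos j with rfl | hj0
  · simp [fW, List.getLastD_eq_getLast?, List.getLast?_eq_getElem?,
      List.getElem?_eq_getElem (Nat.sub_one_lt_of_lt hj)]
  · rw [fW, if_neg hj0.ne', List.getD_eq_getElem _ _ (by omega),
      ← List.isChain_iff_getElem.mp hcomp (w.length - 1 - j) (by omega)]
    congr 2
    omega

lemma strictMonoOn_fW (hcomp : w.IsChain (fun c d => d.tgt = c.src))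
    (hup : ∀ c ∈ w, c.ascends = true) : StrictMonoOn (fW w) (Set.Iic w.length) := by
  refine strictMonoOn_of_lt_succ Set.ordConnected_Iic fun j _ _ hj => ?_
  simp only [Order.succ_eq_add_one, Set.mem_Iic] at hj ⊢
  obtain ⟨hsrc, htgt⟩ := fW_eq_src_and_fW_succ_eq_tgt hcomp (j := j) (by omega)
  rw [hsrc, htgt, Letter.tgt_eq_src_add_one (hup _ (List.getElem_mem _))]
  omega

lemma strictAntiOn_fW (hcomp : w.IsChain (fun c d => d.tgt = c.src))
    (hdown : ∀ c ∈ w, c.ascends = false) : StrictAntiOn (fW w) (Set.Iic w.length) := by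
  refine strictAntiOn_of_succ_lt Set.ordConnected_Iic fun j _ _ hj => ?_
  simp only [Order.succ_eq_add_one, Set.mem_Iic] at hj ⊢
  obtain ⟨hsrc, htgt⟩ := fW_eq_src_and_fW_succ_eq_tgt hcomp (j := j) (by omega)
  rw [hsrc, htgt, Letter.src_eq_tgt_add_one (hdown _ (List.getElem_mem _))]
  omega

@[simp] lemma length_starWalk : (starWalk w).length = w.length := by simp [starWalk]

lemma fW_starWalk (hcomp : w.IsChain (fun c d => d.tgt = c.src)) {j : ℕ}
    (hj : j ≤ w.length) : fW (starWalk w) j = fW w (w.length - j) := by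
  rcases Nat.eq_zero_or_pos w.length with hw | hw
  · simp_all [List.length_eq_zero_iff.mp hw, starWalk]
  rcases j with _ | k
  · simp [fW, starWalk, hw.ne', List.getLastD_eq_getLast?, List.getLast?_reverse,
      List.head?_eq_getElem?, List.getElem?_eq_getElem hw]
  · rw [show w.length - (k + 1) = w.length - 1 - k by omega,
      (fW_eq_src_and_fW_succ_eq_tgt hcomp (j := w.length - 1 - k) (by omega)).1]
    simp only [fW, starWalk, k.succ_ne_zero, if_false]
    rw [List.getD_eq_getElem _ _ (by simp; omega), List.getElem_reverse, List.getElem_map,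
      Letter.tgt_star]
    congr 2
    simp only [List.length_reverse, List.length_map]
    omega

end Walk

lemma strictAntiOn_comp_tsub_iff {α : Type*} [Preorder α] {f : ℕ → α} {m : ℕ} :
    StrictAntiOn (fun j => f (m - j)) (Set.Iic m) ↔ StrictMonoOn f (Set.Iic m) := by
  simp only [StrictAntiOn, StrictMonoOn, Set.mem_Iic]
  constructor
  · intro h x hx y hy hxy
    simpa [Nat.sub_sub_self hx, Nat.sub_sub_self hy] using
      h (a := m - y) (b := m - x) (by omega) (by omega) (by omega)
  · intro h x _ y _ hxy
    exact h (by omega) (by omega) (by omega)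

theorem stmt_2_general (n : ℕ) (w : List Letter) (hw : IsString n w) (halt : IsAlternating w) :
    (StrictMonoOn (fW w) (Set.Iic w.length) ∨ StrictAntiOn (fW w) (Set.Iic w.length)) ∧
    (StrictMonoOn (fW w) (Set.Iic w.length) ↔
      StrictAntiOn (fW (starWalk w)) (Set.Iic (starWalk w).length)) := by
  obtain ⟨⟨-, hcomp⟩, hred, -⟩ := hw
  have hstar : StrictAntiOn (fW (starWalk w)) (Set.Iic (starWalk w).length) ↔
      StrictMonoOn (fW w) (Set.Iic w.length) := by
    rw [length_starWalk, ← strictAntiOn_comp_tsub_iff]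
    exact Set.EqOn.congr_strictAntiOn fun j hj => fW_starWalk hcomp hj
  refine ⟨?_, hstar.symm⟩
  obtain ⟨u, hu⟩ := exists_forall_ascends_eq hcomp hred halt
  cases u
  · exact .inr (strictAntiOn_fW hcomp hu)
  · exact .inl (strictMonoOn_fW hcomp hu)

/-- for an alternating string `w = γ₁…γₘ` of length `m ≥ 1` on
`(Q(n), I(n))`, the function `f_w` is strictly monotone on `{0,…,m}`; moreover
`f_w` is strictly increasing iff `f_{w*}` is strictly decreasing. -/
theorem stmt_2 (n : ℕ) (w : List Letter) (hw : IsString n w) (halt : IsAlternating w)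
    (hm : 1 ≤ w.length) :
    (StrictMonoOn (fW w) (Set.Iic w.length) ∨ StrictAntiOn (fW w) (Set.Iic w.length)) ∧
    (StrictMonoOn (fW w) (Set.Iic w.length) ↔
      StrictAntiOn (fW (starWalk w)) (Set.Iic (starWalk w).length)) :=
  stmt_2_general n w hw halt
end

section
/- There are no bands on (Q(n), I(n)) for any n ≥ 1. More precisely, no nontrivial reduced cycle w on Q(n) has the property that w^h is a string on (Q(n), I(n)) for all h ≥ 1. -/
open Letter

/-! Every turn of a walk from an ascending letter to a descending one is ruled out in a string:
it is either a reduction (`α i α i*`, `β i* β i`) or a monomial of `I(n)` (`α i β i`, `β i* α i*`).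
So, in the order of traversal, the vertex index along a string first descends and then ascends.
In `w²` every letter of `w` occurs both before and after every other, so all letters of a band
`w` would move in the same direction, and `w` could not return to its source. -/

namespace List

theorem isChain_of_forall_infix {α : Type*} {R : α → α → Prop} :
    ∀ l : List α, (∀ x y, [x, y] <:+: l → R x y) → l.IsChain R
  | [], _ => isChain_nil
  | [_], _ => isChain_singleton _
  | x :: y :: l, h => isChain_cons_cons.mpr
      ⟨h x y ⟨[], l, rfl⟩, isChain_of_forall_infix (y :: l) fun u v huv ↦
        h u v (huv.trans (suffix_cons x (y :: l)).isInfix)⟩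

end List

namespace Letter

def goesUp (c : Letter) : Bool := decide (c.src < c.tgt)

theorem src_lt_tgt_of_goesUp {c : Letter} (h : c.goesUp = true) : c.src < c.tgt := by
  simpa [goesUp] using h

theorem tgt_lt_src_of_goesUp_eq_false {c : Letter} (h : c.goesUp = false) : c.tgt < c.src := by
  cases c <;> simp_all [goesUp, src, tgt]

theorem goesUp_le_of_string_pair {n : ℕ} {x y : Letter} (hw : y.tgt = x.src) (hr : x ≠ y.star)
    (hf : ¬ ForbiddenPair n x y) (hf' : ¬ ForbiddenPair n y.star x.star) :
    y.goesUp ≤ x.goesUp := by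
  cases x <;> cases y <;> simp_all [goesUp, src, tgt, star, ForbiddenPair]

end Letter

open Letter

theorem walkTgt_cons (a : Letter) (t : List Letter) : walkTgt (a :: t) = a.tgt := by
  simp [walkTgt, fW]

theorem rel_walkSrc_tgt_of_forall_mem {r : ℕ → ℕ → Prop} [IsTrans ℕ r] :
    ∀ (x : Letter) (t : List Letter), (x :: t).IsChain (fun c d => d.tgt = c.src) →
      (∀ c ∈ x :: t, r c.src c.tgt) → r (walkSrc (x :: t)) x.tgt
  | x, [], _, h => h x (by simp)
  | x, y :: t, hc, h => by
    obtain ⟨hxy, hc⟩ := List.isChain_cons_cons.mp hc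
    have ih := rel_walkSrc_tgt_of_forall_mem y t hc fun c hc ↦ h c (by simp [hc])
    exact _root_.trans (hxy ▸ ih) (h x (by simp))

theorem IsString.isChain_map_goesUp {n : ℕ} {w : List Letter} (hw : IsString n w) :
    (w.map goesUp).IsChain (· ≥ ·) := by
  obtain ⟨⟨-, hwalk⟩, hred, hforb⟩ := hw
  rw [List.isChain_map]
  refine List.isChain_of_forall_infix w fun x y hxy ↦ ?_
  exact goesUp_le_of_string_pair (hwalk.infix hxy).rel (hred.infix hxy).rel
    (hforb x y hxy).1 (hforb x y hxy).2

theorem IsString.goesUp_eq_of_append_self {n : ℕ} {w : List Letter} (hw : IsString n (w ++ w))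
    {c d : Letter} (hc : c ∈ w) (hd : d ∈ w) : c.goesUp = d.goesUp := by
  have hsorted := List.isChain_iff_pairwise.mp hw.isChain_map_goesUp
  rw [List.map_append, List.pairwise_append] at hsorted
  obtain ⟨-, -, hcross⟩ := hsorted
  exact le_antisymm (hcross _ (List.mem_map_of_mem hd) _ (List.mem_map_of_mem hc))
    (hcross _ (List.mem_map_of_mem hc) _ (List.mem_map_of_mem hd))

theorem powWalk_two (w : List Letter) : powWalk w 2 = w ++ w := by
  simp [powWalk, List.replicate]

theorem stmt_5_general (n : ℕ) :
    ¬ ∃ w : List Letter, w ≠ [] ∧ IsWalk n w ∧ walkSrc w = walkTgt w ∧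
      IsReducedWalk w ∧ w.getLast? ≠ w.head?.map Letter.star ∧
      ∀ h : ℕ, 1 ≤ h → IsString n (powWalk w h) := by
  rintro ⟨w, hne, ⟨-, hwalk⟩, hcyc, -, -, hstr⟩
  obtain ⟨a, t, rfl⟩ := List.exists_cons_of_ne_nil hne
  have hsq : IsString n (a :: t ++ a :: t) := powWalk_two (a :: t) ▸ hstr 2 one_le_two
  have hdir : ∀ c ∈ a :: t, c.goesUp = a.goesUp := fun c hc ↦
    hsq.goesUp_eq_of_append_self hc List.mem_cons_self
  rw [walkTgt_cons] at hcyc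
  cases hup : a.goesUp
  · have := rel_walkSrc_tgt_of_forall_mem (r := (· > ·)) a t hwalk fun c hc ↦
      tgt_lt_src_of_goesUp_eq_false ((hdir c hc).trans hup)
    omega
  · have := rel_walkSrc_tgt_of_forall_mem (r := (· < ·)) a t hwalk fun c hc ↦
      src_lt_tgt_of_goesUp ((hdir c hc).trans hup)
    omega

/-- there are no bands on `(Q(n), I(n))` for any `n ≥ 1`.  More
precisely, no nontrivial reduced cycle `w` (a walk of positive length with
`s(w) = t(w)`, cyclically reduced) has the property that `w^h` is a string on
`(Q(n), I(n))` for all `h ≥ 1`. -/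
theorem stmt_5 (n : ℕ) (hn : 1 ≤ n) :
    ¬ ∃ w : List Letter, w ≠ [] ∧ IsWalk n w ∧ walkSrc w = walkTgt w ∧
      IsReducedWalk w ∧ w.getLast? ≠ w.head?.map Letter.star ∧
      ∀ h : ℕ, 1 ≤ h → IsString n (powWalk w h) :=
  stmt_5_general n
end

section
/- Every string on (Q(n), I(n)) is of exactly one of three types: (1) a trivial path ε_i for some vertex i ∈ {0,...,n}; (2) one of the two cycles β_{n-1}α_{n-1} or α_{n-1}*β_{n-1}*; (3) an alternating walk, i.e. a walk γ_1...γ_m in which γ_k is an honest arrow if and only if γ_{k+1} is a formal inverse of an arrow, for every k < m. -/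
open Letter

lemma string_tail {n : ℕ} {x : Letter} {xs : List Letter} (h : IsString n (x :: xs)) :
    IsString n xs := by
  obtain ⟨⟨hv, hc⟩, hr, hf⟩ := h
  refine ⟨⟨fun c hc' => hv c (List.mem_cons_of_mem _ hc'), hc.tail⟩, hr.tail, ?_⟩
  intro a b hab
  refine hf a b ?_
  obtain ⟨s, t, rfl⟩ := hab
  exact ⟨x :: s, t, rfl⟩

/-- Classification of an adjacent same-honesty pair inside a string. -/
lemma pair_cases {m : ℕ} {x y : Letter}
    (hvx : x.valid (m + 1)) (hvy : y.valid (m + 1))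
    (hc : y.tgt = x.src) (hr : x ≠ y.star)
    (hf : ¬ ForbiddenPair (m + 1) x y)
    (hf' : ¬ ForbiddenPair (m + 1) y.star x.star)
    (hh : x.honest = y.honest) :
    (x = .b m ∧ y = .a m) ∨ (x = .ia m ∧ y = .ib m) := by
  cases x <;> cases y <;>
    simp_all [Letter.honest, Letter.src, Letter.tgt, Letter.star, Letter.valid,
      ForbiddenPair] <;> omega

/-- Nothing can follow `α m` in a string on `Q(m+1)`. -/
lemma no_ext_a {m : ℕ} {z : Letter} (hv : z.valid (m + 1)) (hc : z.tgt = m + 1)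
    (hr : Letter.a m ≠ z.star) (hf : ¬ ForbiddenPair (m + 1) (.a m) z) : False := by
  cases z <;>
    simp_all [Letter.tgt, Letter.star, Letter.valid, ForbiddenPair] <;> omega

/-- Nothing can follow `β m *` in a string on `Q(m+1)`. -/
lemma no_ext_ib {m : ℕ} {z : Letter} (hv : z.valid (m + 1)) (hc : z.tgt = m + 1)
    (hr : Letter.ib m ≠ z.star)
    (hf' : ¬ ForbiddenPair (m + 1) z.star (Letter.ib m).star) : False := by
  cases z <;>
    simp_all [Letter.tgt, Letter.star, Letter.valid, ForbiddenPair] <;> omega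

/-- Nothing can precede `β m` in a string on `Q(m+1)`. -/
lemma no_pre_b {m : ℕ} {x : Letter} (hv : x.valid (m + 1)) (hc : m + 1 = x.src)
    (hr : x ≠ (Letter.b m).star) (hf : ¬ ForbiddenPair (m + 1) x (.b m)) : False := by
  cases x <;>
    simp_all [Letter.src, Letter.star, Letter.valid, ForbiddenPair] <;> omega

/-- Nothing can precede `α m *` in a string on `Q(m+1)`. -/
lemma no_pre_ia {m : ℕ} {x : Letter} (hv : x.valid (m + 1)) (hc : m + 1 = x.src)
    (hr : x ≠ (Letter.ia m).star)
    (hf' : ¬ ForbiddenPair (m + 1) (Letter.ia m).star x.star) : False := by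
  cases x <;>
    simp_all [Letter.src, Letter.star, Letter.valid, ForbiddenPair] <;> omega

lemma string_classify {m : ℕ} : ∀ w : List Letter, IsString (m + 1) w →
    IsAlternating w ∨ w = [.b m, .a m] ∨ w = [.ia m, .ib m] := by
  intro w
  induction w with
  | nil => intro _; exact Or.inl List.isChain_nil
  | cons x xs ih =>
    intro hw
    cases xs with
    | nil => exact Or.inl (List.isChain_singleton x)
    | cons y rest =>
      obtain ⟨⟨hv, hc⟩, hr, hf⟩ := hw
      have hvx : x.valid (m + 1) := hv x (by simp)
      have hvy : y.valid (m + 1) := hv y (by simp)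
      have hcxy : y.tgt = x.src := (List.isChain_cons_cons.mp hc).1
      have hrxy : x ≠ y.star := (List.isChain_cons_cons.mp hr).1
      have hfxy := hf x y ⟨[], rest, rfl⟩
      rcases ih (string_tail ⟨⟨hv, hc⟩, hr, hf⟩) with halt | hcy1 | hcy2
      · by_cases hh : x.honest = y.honest
        · rcases pair_cases hvx hvy hcxy hrxy hfxy.1 hfxy.2 hh with ⟨hx, hy⟩ | ⟨hx, hy⟩ <;>
            subst hx <;> subst hy
          · right; left
            cases rest with
            | nil => rfl
            | cons z r =>
              have hvz : z.valid (m + 1) := hv z (by simp)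
              have hcyz : z.tgt = (Letter.a m).src :=
                (List.isChain_cons_cons.mp (List.isChain_cons_cons.mp hc).2).1
              have hryz : Letter.a m ≠ z.star :=
                (List.isChain_cons_cons.mp (List.isChain_cons_cons.mp hr).2).1
              have hfyz := hf (Letter.a m) z ⟨[Letter.b m], r, rfl⟩
              exact absurd (no_ext_a hvz hcyz hryz hfyz.1) id
          · right; right
            cases rest with
            | nil => rfl
            | cons z r =>
              have hvz : z.valid (m + 1) := hv z (by simp)
              have hcyz : z.tgt = (Letter.ib m).src :=
                (List.isChain_cons_cons.mp (List.isChain_cons_cons.mp hc).2).1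
              have hryz : Letter.ib m ≠ z.star :=
                (List.isChain_cons_cons.mp (List.isChain_cons_cons.mp hr).2).1
              have hfyz := hf (Letter.ib m) z ⟨[Letter.ia m], r, rfl⟩
              exact absurd (no_ext_ib hvz hcyz hryz hfyz.2) id
        · left
          refine List.isChain_cons_cons.mpr ⟨?_, halt⟩
          cases hx : x.honest <;> cases hy : y.honest <;> simp_all
      · -- y :: rest = [b m, a m], so y = b m; contradiction from the letter before
        have hy : y = Letter.b m := by injection hcy1
        subst hy
        exact absurd (no_pre_b hvx hcxy hrxy hfxy.1) id
      · have hy : y = Letter.ia m := by injection hcy2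
        subst hy
        exact absurd (no_pre_ia hvx hcxy hrxy hfxy.2) id

/-- every string on `(Q(n), I(n))` is of exactly one of three
types: (1) a trivial path (length 0); (2) one of the two cycles
`β_{n-1} α_{n-1}` and `α_{n-1}* β_{n-1}*`; (3) an alternating walk of positive
length. -/
theorem stmt_6 (n : ℕ) (hn : 1 ≤ n) (w : List Letter) (hw : IsString n w) :
    (w.length = 0 ∨
      (w = [Letter.b (n - 1), Letter.a (n - 1)] ∨
        w = [Letter.ia (n - 1), Letter.ib (n - 1)]) ∨
      (IsAlternating w ∧ 0 < w.length)) ∧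
    ¬ (w.length = 0 ∧
        (w = [Letter.b (n - 1), Letter.a (n - 1)] ∨
          w = [Letter.ia (n - 1), Letter.ib (n - 1)])) ∧
    ¬ (w.length = 0 ∧ (IsAlternating w ∧ 0 < w.length)) ∧
    ¬ ((w = [Letter.b (n - 1), Letter.a (n - 1)] ∨
          w = [Letter.ia (n - 1), Letter.ib (n - 1)]) ∧
        (IsAlternating w ∧ 0 < w.length)) := by
  obtain ⟨m, rfl⟩ : ∃ m, n = m + 1 := ⟨n - 1, (Nat.succ_pred_eq_of_pos hn).symm⟩
  have hm : m + 1 - 1 = m := rfl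
  rw [hm]
  have hcyc : ∀ u v : Letter, u.honest = v.honest → ¬ IsAlternating [u, v] := by
    intro u v huv halt
    have h := (List.isChain_cons_cons.mp halt).1
    rw [huv] at h
    exact absurd h (by cases v.honest <;> simp)
  rcases string_classify w hw with halt | hc1 | hc2
  · cases w with
    | nil =>
      refine ⟨Or.inl rfl, ?_, ?_, ?_⟩ <;> rintro ⟨h1, h2⟩ <;> simp_all
    | cons x xs =>
      refine ⟨Or.inr (Or.inr ⟨halt, by simp⟩), ?_, ?_, ?_⟩
      · rintro ⟨h1, _⟩; simp at h1
      · rintro ⟨h1, _⟩; simp at h1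
      · rintro ⟨h1 | h1, h2, _⟩ <;> rw [h1] at h2
        · exact hcyc _ _ (by rfl) h2
        · exact hcyc _ _ (by rfl) h2
  · subst hc1
    refine ⟨Or.inr (Or.inl (Or.inl rfl)), ?_, ?_, ?_⟩
    · rintro ⟨h1, _⟩; simp at h1
    · rintro ⟨h1, _⟩; simp at h1
    · rintro ⟨_, h2, _⟩; exact hcyc _ _ (by rfl) h2
  · subst hc2
    refine ⟨Or.inr (Or.inl (Or.inr rfl)), ?_, ?_, ?_⟩
    · rintro ⟨h1, _⟩; simp at h1
    · rintro ⟨h1, _⟩; simp at h1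
    · rintro ⟨_, h2, _⟩; exact hcyc _ _ (by rfl) h2
end

section
/- If w = γ_1...γ_m is a string on (Q(n), I(n)) of length m ≥ 2, then either w = β_{n-1}α_{n-1}, or w = α_{n-1}*β_{n-1}*, or w contains no path of length ≥ 2 (neither as a subword nor via the formal inverse of a subword). -/
open Letter

section Aux

lemma Letter.star_star (x : Letter) : x.star.star = x := by cases x <;> rfl

lemma Letter.tgt_star_s7 (x : Letter) : x.star.tgt = x.src := by cases x <;> rfl

lemma Letter.src_star_s7 (x : Letter) : x.star.src = x.tgt := by cases x <;> rfl

lemma pair_of_infix {n : ℕ} {w : List Letter} (hw : IsString n w) {x y : Letter}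
    (h : [x, y] <:+: w) :
    x.valid n ∧ y.valid n ∧ y.tgt = x.src ∧ x ≠ y.star ∧
      ¬ ForbiddenPair n x y ∧ ¬ ForbiddenPair n y.star x.star := by
  obtain ⟨⟨hval, hchain⟩, hred, hfp⟩ := hw
  have hsub := h.sublist
  refine ⟨hval x (hsub.mem (by simp)), hval y (hsub.mem (by simp)), ?_, ?_,
    (hfp x y h).1, (hfp x y h).2⟩
  · simpa using hchain.infix h
  · simpa using hred.infix h

lemma honest_pair {n : ℕ} {x y : Letter} (hx : x.honest = true) (hy : y.honest = true)
    (hvx : x.valid n) (hvy : y.valid n) (ht : y.tgt = x.src)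
    (hfp : ¬ ForbiddenPair n x y) :
    x = Letter.b (n - 1) ∧ y = Letter.a (n - 1) := by
  cases x <;> cases y <;>
    simp_all [Letter.honest, Letter.valid, Letter.tgt, Letter.src, ForbiddenPair] <;> omega

lemma eq_of_ba_infix {n : ℕ} (hn : 1 ≤ n) {w : List Letter} (hw : IsString n w)
    (hinf : [Letter.b (n - 1), Letter.a (n - 1)] <:+: w) :
    w = [Letter.b (n - 1), Letter.a (n - 1)] := by
  obtain ⟨s, t, hst⟩ := hinf
  have ht : t = [] := by
    cases t with
    | nil => rfl
    | cons z t' =>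
      exfalso
      have hinf2 : [Letter.a (n - 1), z] <:+: w :=
        ⟨s ++ [Letter.b (n - 1)], t', by rw [← hst]; simp⟩
      obtain ⟨hv1, hv2, htg, hne, hf1, hf2⟩ := pair_of_infix hw hinf2
      cases z <;>
        simp_all [Letter.src, Letter.tgt, Letter.valid, Letter.star, ForbiddenPair] <;> omega
  subst ht
  have hs : s = [] := by
    rcases s.eq_nil_or_concat' with rfl | ⟨L, z, rfl⟩
    · rfl
    · exfalso
      have hinf2 : [z, Letter.b (n - 1)] <:+: w :=
        ⟨L, [Letter.a (n - 1)], by rw [← hst]; simp⟩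
      obtain ⟨hv1, hv2, htg, hne, hf1, hf2⟩ := pair_of_infix hw hinf2
      cases z <;>
        simp_all [Letter.src, Letter.tgt, Letter.valid, Letter.star, ForbiddenPair] <;> omega
  subst hs
  simpa using hst.symm

lemma eq_of_iaib_infix {n : ℕ} (hn : 1 ≤ n) {w : List Letter} (hw : IsString n w)
    (hinf : [Letter.ia (n - 1), Letter.ib (n - 1)] <:+: w) :
    w = [Letter.ia (n - 1), Letter.ib (n - 1)] := by
  obtain ⟨s, t, hst⟩ := hinf
  have ht : t = [] := by
    cases t with
    | nil => rfl
    | cons z t' =>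
      exfalso
      have hinf2 : [Letter.ib (n - 1), z] <:+: w :=
        ⟨s ++ [Letter.ia (n - 1)], t', by rw [← hst]; simp⟩
      obtain ⟨hv1, hv2, htg, hne, hf1, hf2⟩ := pair_of_infix hw hinf2
      cases z <;>
        simp_all [Letter.src, Letter.tgt, Letter.valid, Letter.star, ForbiddenPair] <;> omega
  subst ht
  have hs : s = [] := by
    rcases s.eq_nil_or_concat' with rfl | ⟨L, z, rfl⟩
    · rfl
    · exfalso
      have hinf2 : [z, Letter.ia (n - 1)] <:+: w :=
        ⟨L, [Letter.ib (n - 1)], by rw [← hst]; simp⟩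
      obtain ⟨hv1, hv2, htg, hne, hf1, hf2⟩ := pair_of_infix hw hinf2
      cases z <;>
        simp_all [Letter.src, Letter.tgt, Letter.valid, Letter.star, ForbiddenPair] <;> omega
  subst hs
  simpa using hst.symm

end Aux

/-- if `w = γ₁…γₘ` is a string on `(Q(n), I(n))` of length `m ≥ 2`,
then either `w = β_{n-1} α_{n-1}`, or `w = α_{n-1}* β_{n-1}*`, or `w` contains no
path of length ≥ 2 (neither as a contiguous subword nor via the formal inverse
of a contiguous subword). -/
theorem stmt_7 (n : ℕ) (hn : 1 ≤ n) (w : List Letter) (hw : IsString n w)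
    (hlen : 2 ≤ w.length) :
    w = [Letter.b (n - 1), Letter.a (n - 1)] ∨
    w = [Letter.ia (n - 1), Letter.ib (n - 1)] ∨
    ∀ p : List Letter, IsPath n p → 2 ≤ p.length →
      ¬ (p <:+: w ∨ starWalk p <:+: w) := by
  by_cases h1 : w = [Letter.b (n - 1), Letter.a (n - 1)]
  · exact Or.inl h1
  by_cases h2 : w = [Letter.ia (n - 1), Letter.ib (n - 1)]
  · exact Or.inr (Or.inl h2)
  refine Or.inr (Or.inr ?_)
  rintro p hp hlenp (hin | hin)
  · obtain ⟨⟨hval, hchain⟩, hhon⟩ := hp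
    match p, hlenp, hval, hhon, hin with
    | x :: y :: rest, _, hval, hhon, hin =>
    have hxy : [x, y] <:+: w := List.IsInfix.trans ⟨[], rest, rfl⟩ hin
    obtain ⟨hv1, hv2, htg, hne, hf1, hf2⟩ := pair_of_infix hw hxy
    obtain ⟨hx, hy⟩ := honest_pair (hhon x (by simp)) (hhon y (by simp)) hv1 hv2 htg hf1
    cases rest with
    | nil =>
      subst hx hy
      exact h1 (eq_of_ba_infix hn hw hin)
    | cons z rest' =>
      have hyz : [y, z] <:+: w := List.IsInfix.trans ⟨[x], rest', rfl⟩ hin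
      obtain ⟨hv1', hv2', htg', hne', hf1', hf2'⟩ := pair_of_infix hw hyz
      obtain ⟨hy', -⟩ := honest_pair (hhon y (by simp)) (hhon z (by simp)) hv1' hv2' htg' hf1'
      rw [hy] at hy'
      exact absurd hy' (by simp)
  · obtain ⟨⟨hval, hchain⟩, hhon⟩ := hp
    match p, hlenp, hval, hchain, hhon, hin with
    | x :: y :: rest, _, hval, hchain, hhon, hin =>
    have hxy : [y.star, x.star] <:+: w :=
      List.IsInfix.trans ⟨(rest.map Letter.star).reverse, [], by simp [starWalk]⟩ hin
    obtain ⟨hv1, hv2, htg, hne, hf1, hf2⟩ := pair_of_infix hw hxy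
    rw [Letter.star_star, Letter.star_star] at hf2
    rw [Letter.tgt_star_s7, Letter.src_star_s7] at htg
    obtain ⟨hx, hy⟩ := honest_pair (hhon x (by simp)) (hhon y (by simp))
      (hval x (by simp)) (hval y (by simp)) htg.symm hf2
    cases rest with
    | nil =>
      subst hx hy
      have : starWalk [Letter.b (n - 1), Letter.a (n - 1)] =
          [Letter.ia (n - 1), Letter.ib (n - 1)] := rfl
      rw [this] at hin
      exact h2 (eq_of_iaib_infix hn hw hin)
    | cons z rest' =>
      have hyz : [z.star, y.star] <:+: w :=
        List.IsInfix.trans ⟨(rest'.map Letter.star).reverse, [x.star], by simp [starWalk]⟩ hin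
      obtain ⟨hv1', hv2', htg', hne', hf1', hf2'⟩ := pair_of_infix hw hyz
      rw [Letter.star_star, Letter.star_star] at hf2'
      rw [Letter.tgt_star_s7, Letter.src_star_s7] at htg'
      obtain ⟨hy', -⟩ := honest_pair (hhon y (by simp)) (hhon z (by simp))
        (hval y (by simp)) (hval z (by simp)) htg'.symm hf2'
      rw [hy] at hy'
      exact absurd hy' (by simp)
end

section
/- For n ≥ 2 and i ∈ {0,...,n−2}, the stability space of the projective-injective B(n)-module R(i) equals {v = (v_n,...,v_0) ∈ ℝ^{n+1} : v_i = v_{i+1} = v_{i+2} = 0}. In particular it has codimension 3 and is not a wall. -/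
/-!  Representations of the quiver `Q(n)` with relations `I(n)`, i.e. modules
over the special biserial algebra `B(n) = k Q(n) / I(n)`.

`Q(n)` has vertices `0,…,n` and arrows `α i : i+1 → i`, `β i : i → i+1` for
`0 ≤ i ≤ n-1`; `I(n)` is generated by `β i α i - α (i+1) β (i+1)`,
`α i α (i+1)`, `β (i+1) β i` (for `0 ≤ i ≤ n-2`) and `α 0 β 0`.

A finite dimensional representation is described, after choosing bases, by its
dimension vector `d` and linear maps between the coordinate spaces
`Fin (d i) → k` satisfying the relations.  (Vertices are indexed by `ℕ`, with
`d i = 0` for `i > n`.) -/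

/-- A finite dimensional representation of `(Q(n), I(n))`, equivalently a
finite dimensional `B(n)`-module. -/
structure QRep (k : Type*) [Field k] (n : ℕ) where
  /-- the dimension vector -/
  d : ℕ → ℕ
  /-- only the vertices `0,…,n` carry a nonzero space -/
  hd : ∀ i, n < i → d i = 0
  /-- the map attached to the arrow `α i : i+1 → i` -/
  α : ∀ i : ℕ, (Fin (d (i + 1)) → k) →ₗ[k] (Fin (d i) → k)
  /-- the map attached to the arrow `β i : i → i+1` -/
  β : ∀ i : ℕ, (Fin (d i) → k) →ₗ[k] (Fin (d (i + 1)) → k)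
  /-- the binomial relations `β i α i = α (i+1) β (i+1)`, `0 ≤ i ≤ n-2` -/
  rel_comm : ∀ i, i + 2 ≤ n → (β i).comp (α i) = (α (i + 1)).comp (β (i + 1))
  /-- the relations `α i α (i+1) = 0`, `0 ≤ i ≤ n-2` -/
  rel_aa : ∀ i, i + 2 ≤ n → (α i).comp (α (i + 1)) = 0
  /-- the relations `β (i+1) β i = 0`, `0 ≤ i ≤ n-2` -/
  rel_bb : ∀ i, i + 2 ≤ n → (β (i + 1)).comp (β i) = 0
  /-- the relation `α 0 β 0 = 0` -/
  rel_ab : (α 0).comp (β 0) = 0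

/-- A homomorphism of representations of `(Q(n), I(n))`: a family of linear
maps commuting with the structure maps. -/
structure RepHom {k : Type*} [Field k] {n : ℕ} (M N : QRep k n) where
  f : ∀ i : ℕ, (Fin (M.d i) → k) →ₗ[k] (Fin (N.d i) → k)
  commα : ∀ i, (f i).comp (M.α i) = (N.α i).comp (f (i + 1))
  commβ : ∀ i, (f (i + 1)).comp (M.β i) = (N.β i).comp (f i)

/-- Two representations are isomorphic if there is a homomorphism all of whose
components are bijective. -/
def RepIso {k : Type*} [Field k] {n : ℕ} (M N : QRep k n) : Prop :=
  ∃ φ : RepHom M N, ∀ i, Function.Bijective (φ.f i)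

/-- A representation is indecomposable iff it is nonzero and its endomorphism
ring has no nontrivial idempotents. -/
def Indec {k : Type*} [Field k] {n : ℕ} (M : QRep k n) : Prop :=
  (∃ i, M.d i ≠ 0) ∧
    ∀ e : RepHom M M, (∀ i, (e.f i).comp (e.f i) = e.f i) →
      (∀ i, e.f i = 0) ∨ (∀ i, e.f i = LinearMap.id)

/-- A subrepresentation (submodule) of a representation `M`: a family of
subspaces invariant under all the structure maps. -/
structure SubRep {k : Type*} [Field k] {n : ℕ} (M : QRep k n) where
  W : ∀ i : ℕ, Submodule k (Fin (M.d i) → k)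
  mapα : ∀ i, (W (i + 1)).map (M.α i) ≤ W i
  mapβ : ∀ i, (W i).map (M.β i) ≤ W (i + 1)

/-- The dimension vector of a subrepresentation. -/
noncomputable def SubRep.dim {k : Type*} [Field k] {n : ℕ} {M : QRep k n} (N : SubRep M) (i : ℕ) : ℕ :=
  Module.finrank k (N.W i)

/-- The standard pairing `⟨v, d⟩ = ∑_{i=0}^{n} v i * d i` between a vector
`v ∈ ℝ^{n+1}` and a dimension vector `d`. -/
noncomputable def pairing (n : ℕ) (v : Fin (n + 1) → ℝ) (d : ℕ → ℕ) : ℝ :=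
  ∑ i : Fin (n + 1), v i * d i

/-- King's stability space `D(M) ⊆ ℝ^{n+1}` of a representation `M`: the set of
`v` with `⟨v, dim M⟩ = 0` and `⟨v, dim N⟩ ≤ 0` for every nonzero proper
subrepresentation `N` of `M`. -/
def StabSpace {k : Type*} [Field k] {n : ℕ} (M : QRep k n) : Set (Fin (n + 1) → ℝ) :=
  {v | pairing n v M.d = 0 ∧
    ∀ N : SubRep M, (∃ i, N.W i ≠ ⊥) → (∃ i, N.W i ≠ ⊤) →
      pairing n v N.dim ≤ 0}

/-! Write `(a, b, c) = (v i, v (i+1), v (i+2))`. Since `R(i)` lives on the vertices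
`i, i+1, i+2`, only `a, b, c` enter the conditions defining `D(R(i))`. The line
`L = {x | x 0 = 0}` at vertex `i+1` contains the images of `β i` and `α (i+1)` and is killed by
`α i` and `β (i+1)`; so putting `L` at `i+1` and `0` or everything at `i` and `i+2` gives proper
submodules with dimension vectors `e_{i+1}`, `e_i + e_{i+1}`, `e_{i+1} + e_{i+2}` and
`e_i + e_{i+1} + e_{i+2}`. Hence `b ≤ 0`, `a + b ≤ 0`, `b + c ≤ 0` and `a + b + c ≤ 0`, while
`a + 2b + c = 0`. Then `b = -(a + b + c) ≥ 0` forces `b = 0`, and `a, c ≤ 0` with `a + c = 0`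
forces `a = c = 0`. -/

open Module

theorem LinearMap.finrank_ker_funLeft_of_injective {K ι κ : Type*} [Field K] [Fintype ι]
    [Fintype κ] (g : ι → κ) (hg : Function.Injective g) :
    finrank K (LinearMap.ker (LinearMap.funLeft K K g)) = Fintype.card κ - Fintype.card ι := by
  have h := (LinearMap.funLeft K K g).finrank_range_add_finrank_ker
  rw [LinearMap.range_eq_top.mpr (LinearMap.funLeft_surjective_of_injective K K g hg),
    finrank_top, finrank_fintype_fun_eq_card, finrank_fintype_fun_eq_card] at h
  omega

lemma sum_ite_one_mul_eq_zero {R ι : Type*} [Semiring R] [Fintype ι] (p : ι → Prop)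
    [DecidablePred p] (x : ι → R) (h : ∀ c, p c → x c = 0) :
    ∑ c, (if p c then 1 else 0) * x c = 0 :=
  Finset.sum_eq_zero fun c _ => by by_cases hc : p c <;> simp [hc, h]

def window {n : ℕ} (i : ℕ) (hi : i + 2 ≤ n) (t : Fin 3) : Fin (n + 1) := ⟨i + t, by omega⟩

lemma window_injective {n i : ℕ} (hi : i + 2 ≤ n) : Function.Injective (window i hi) :=
  fun s t h => Fin.ext (by simpa [window] using h)

lemma mem_ker_funLeft_window_iff {n i : ℕ} (hi : i + 2 ≤ n) (v : Fin (n + 1) → ℝ) :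
    v ∈ LinearMap.ker (LinearMap.funLeft ℝ ℝ (window i hi)) ↔
      v (window i hi 0) = 0 ∧ v (window i hi 1) = 0 ∧ v (window i hi 2) = 0 := by
  simp [funext_iff, Fin.forall_fin_succ, window]

lemma pairing_eq_of_support {n i : ℕ} (hi : i + 2 ≤ n) (v : Fin (n + 1) → ℝ) {d : ℕ → ℕ}
    (hd : ∀ j, j < i ∨ i + 2 < j → d j = 0) :
    pairing n v d =
      v (window i hi 0) * d i + v (window i hi 1) * d (i + 1) + v (window i hi 2) * d (i + 2) := by
  have h := Fintype.sum_of_injective (window i hi) (window_injective hi)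
    (fun t => v (window i hi t) * d (window i hi t)) (fun j => v j * d j) ?_ fun _ => rfl
  · rw [pairing, ← h, Fin.sum_univ_three]
    rfl
  · intro j hj
    rw [hd j ?_, Nat.cast_zero, mul_zero]
    by_contra hji
    exact hj ⟨⟨j - i, by omega⟩, Fin.ext (by simp [window]; omega)⟩

section

variable {k : Type*} [Field k] {n : ℕ}

lemma SubRep.dim_le {M : QRep k n} (N : SubRep M) (j : ℕ) : N.dim j ≤ M.d j :=
  (Submodule.finrank_le (N.W j)).trans_eq (finrank_fin_fun k)

lemma mem_stabSpace_of_eq_zero_on_window {i : ℕ} (hi : i + 2 ≤ n)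
    {M : QRep k n} (hsupp : ∀ j, j < i ∨ i + 2 < j → M.d j = 0) {v : Fin (n + 1) → ℝ}
    (hv : v (window i hi 0) = 0 ∧ v (window i hi 1) = 0 ∧ v (window i hi 2) = 0) :
    v ∈ StabSpace M := by
  have hpairing (d : ℕ → ℕ) (hd : ∀ j, j < i ∨ i + 2 < j → d j = 0) : pairing n v d = 0 := by
    rw [pairing_eq_of_support hi v hd, hv.1, hv.2.1, hv.2.2]
    ring
  refine ⟨hpairing _ hsupp, fun N _ _ => (hpairing _ fun j hj => ?_).le⟩
  exact Nat.eq_zero_of_le_zero ((N.dim_le j).trans (hsupp j hj).le)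

variable (k) in
def coordZeroKer (d : ℕ) : Submodule k (Fin d → k) :=
  LinearMap.ker (LinearMap.funLeft k k (Subtype.val : {c : Fin d // c.val = 0} → Fin d))

lemma mem_coordZeroKer {d : ℕ} {x : Fin d → k} :
    x ∈ coordZeroKer k d ↔ ∀ c : Fin d, c.val = 0 → x c = 0 := by
  simp [coordZeroKer, funext_iff]

lemma finrank_coordZeroKer {d : ℕ} (hd : 0 < d) : finrank k (coordZeroKer k d) = d - 1 := by
  have hcard : Fintype.card {c : Fin d // c.val = 0} = 1 :=
    Fintype.card_eq_one_iff.mpr ⟨⟨⟨0, hd⟩, rfl⟩, fun c => Subtype.ext (Fin.ext c.2)⟩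
  rw [coordZeroKer, LinearMap.finrank_ker_funLeft_of_injective _ Subtype.val_injective,
    Fintype.card_fin, hcard]

end

section ModuleR

variable {k : Type*} [Field k] {n : ℕ} {M : QRep k n} {i : ℕ}
variable (hα : ∀ j (x : Fin (M.d (j + 1)) → k) (r : Fin (M.d j)), M.α j x r =
      ∑ c : Fin (M.d (j + 1)),
        (if (j = i ∧ r.val = 0 ∧ c.val = 0) ∨ (j = i + 1 ∧ r.val = 1 ∧ c.val = 0)
          then (1 : k) else 0) * x c)
variable (hβ : ∀ j (x : Fin (M.d j) → k) (r : Fin (M.d (j + 1))), M.β j x r =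
      ∑ c : Fin (M.d j),
        (if (j = i ∧ r.val = 1 ∧ c.val = 0) ∨ (j = i + 1 ∧ r.val = 0 ∧ c.val = 0)
          then (1 : k) else 0) * x c)

include hα in
lemma alpha_eq_zero {j : ℕ} (h₁ : j ≠ i) (h₂ : j ≠ i + 1) : M.α j = 0 :=
  LinearMap.ext fun x => funext fun r => by
    rw [hα, LinearMap.zero_apply, Pi.zero_apply]
    exact sum_ite_one_mul_eq_zero _ _ fun c hc => by omega

include hβ in
lemma beta_eq_zero {j : ℕ} (h₁ : j ≠ i) (h₂ : j ≠ i + 1) : M.β j = 0 :=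
  LinearMap.ext fun x => funext fun r => by
    rw [hβ, LinearMap.zero_apply, Pi.zero_apply]
    exact sum_ite_one_mul_eq_zero _ _ fun c hc => by omega

include hα in
lemma alpha_apply_eq_zero_of_mem_coordZeroKer {x : Fin (M.d (i + 1)) → k}
    (hx : x ∈ coordZeroKer k _) : M.α i x = 0 := by
  ext r
  rw [hα, Pi.zero_apply]
  exact sum_ite_one_mul_eq_zero _ _ fun c hc => mem_coordZeroKer.mp hx c (by omega)

include hβ in
lemma beta_succ_apply_eq_zero_of_mem_coordZeroKer {x : Fin (M.d (i + 1)) → k}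
    (hx : x ∈ coordZeroKer k _) : M.β (i + 1) x = 0 := by
  ext r
  rw [hβ, Pi.zero_apply]
  exact sum_ite_one_mul_eq_zero _ _ fun c hc => mem_coordZeroKer.mp hx c (by omega)

include hα in
lemma alpha_succ_apply_mem_coordZeroKer (x : Fin (M.d (i + 2)) → k) :
    M.α (i + 1) x ∈ coordZeroKer k _ :=
  mem_coordZeroKer.mpr fun r hr => by
    rw [hα]
    exact sum_ite_one_mul_eq_zero _ _ fun c hc => by omega

include hβ in
lemma beta_apply_mem_coordZeroKer (x : Fin (M.d i) → k) : M.β i x ∈ coordZeroKer k _ :=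
  mem_coordZeroKer.mpr fun r hr => by
    rw [hβ]
    exact sum_ite_one_mul_eq_zero _ _ fun c hc => by omega

variable (M i) in
def lineW (a b : Bool) (j : ℕ) : Submodule k (Fin (M.d j) → k) :=
  if j = i + 1 then coordZeroKer k (M.d j) else if (j = i ∧ a) ∨ (j = i + 2 ∧ b) then ⊤ else ⊥

def lineSubRep (a b : Bool) : SubRep M where
  W := lineW M i a b
  mapα j := by
    rintro _ ⟨x, hx, rfl⟩
    by_cases hj : j = i
    · subst hj
      rw [alpha_apply_eq_zero_of_mem_coordZeroKer hα (by simpa [lineW] using hx)]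
      exact zero_mem _
    by_cases hj' : j = i + 1
    · subst hj'
      simpa [lineW] using alpha_succ_apply_mem_coordZeroKer hα x
    · rw [alpha_eq_zero hα hj hj', LinearMap.zero_apply]
      exact zero_mem _
  mapβ j := by
    rintro _ ⟨x, hx, rfl⟩
    by_cases hj : j = i
    · subst hj
      simpa [lineW] using beta_apply_mem_coordZeroKer hβ x
    by_cases hj' : j = i + 1
    · subst hj'
      rw [beta_succ_apply_eq_zero_of_mem_coordZeroKer hβ (by simpa [lineW] using hx)]
      exact zero_mem _
    · rw [beta_eq_zero hβ hj hj', LinearMap.zero_apply]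
      exact zero_mem _

variable (hd : ∀ j, M.d j = if j = i + 1 then 2 else if j = i ∨ j = i + 2 then 1 else 0)

include hd in
lemma d_eq_zero_of_lt_or_gt {j : ℕ} (hj : j < i ∨ i + 2 < j) : M.d j = 0 := by
  rw [hd, if_neg (by omega), if_neg (by omega)]

include hd in
lemma d_self : M.d i = 1 := by
  rw [hd, if_neg (by omega), if_pos (Or.inl rfl)]

include hd in
lemma d_succ : M.d (i + 1) = 2 := by
  rw [hd, if_pos rfl]

include hd in
lemma d_add_two : M.d (i + 2) = 1 := by
  rw [hd, if_neg (by omega), if_pos (Or.inr rfl)]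

include hd in
lemma finrank_lineW_self (a b : Bool) : finrank k (lineW M i a b i) = a.toNat := by
  rw [lineW, if_neg (by omega)]
  cases a
  · rw [if_neg (by simp), finrank_bot, Bool.toNat_false]
  · rw [if_pos (by simp), finrank_top, finrank_fin_fun, d_self hd, Bool.toNat_true]

include hd in
lemma finrank_lineW_succ (a b : Bool) : finrank k (lineW M i a b (i + 1)) = 1 := by
  rw [lineW, if_pos rfl, finrank_coordZeroKer (by rw [d_succ hd]; omega), d_succ hd]

include hd in
lemma finrank_lineW_add_two (a b : Bool) : finrank k (lineW M i a b (i + 2)) = b.toNat := by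
  rw [lineW, if_neg (by omega)]
  cases b
  · rw [if_neg (by simp), finrank_bot, Bool.toNat_false]
  · rw [if_pos (by simp), finrank_top, finrank_fin_fun, d_add_two hd, Bool.toNat_true]

include hd in
lemma lineW_succ_ne_bot (a b : Bool) : lineW M i a b (i + 1) ≠ ⊥ := fun h => by
  have := finrank_lineW_succ (k := k) hd a b
  rw [h, finrank_bot] at this
  exact zero_ne_one this

include hd in
lemma lineW_succ_ne_top (a b : Bool) : lineW M i a b (i + 1) ≠ ⊤ := fun h => by
  have := finrank_lineW_succ (k := k) hd a b
  rw [h, finrank_top, finrank_fin_fun, d_succ hd] at this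
  omega

include hd hα hβ in
lemma eq_zero_on_window_of_mem_stabSpace (hi : i + 2 ≤ n) {v : Fin (n + 1) → ℝ}
    (hv : v ∈ StabSpace M) :
    v (window i hi 0) = 0 ∧ v (window i hi 1) = 0 ∧ v (window i hi 2) = 0 := by
  obtain ⟨htotal, hsub⟩ := hv
  have hsupp : ∀ j, j < i ∨ i + 2 < j → M.d j = 0 := fun j => d_eq_zero_of_lt_or_gt hd
  have hline (a b : Bool) :
      v (window i hi 0) * a.toNat + v (window i hi 1) + v (window i hi 2) * b.toNat ≤ 0 := by
    have h := hsub (lineSubRep hα hβ a b) ⟨i + 1, lineW_succ_ne_bot hd a b⟩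
      ⟨i + 1, lineW_succ_ne_top hd a b⟩
    rwa [pairing_eq_of_support hi v fun j hj => Nat.eq_zero_of_le_zero
        ((SubRep.dim_le _ j).trans (hsupp j hj).le),
      SubRep.dim, lineSubRep, finrank_lineW_self hd, SubRep.dim, finrank_lineW_succ hd,
      SubRep.dim, finrank_lineW_add_two hd, Nat.cast_one, mul_one] at h
  rw [pairing_eq_of_support hi v hsupp, d_self hd, d_succ hd, d_add_two hd] at htotal
  have h₀ := hline false false
  have h₁ := hline true true
  have h₂ := hline true false
  have h₃ := hline false true
  simp only [Bool.toNat_false, Bool.toNat_true, Nat.cast_zero, Nat.cast_one, Nat.cast_ofNat,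
    mul_zero, mul_one, zero_add, add_zero] at htotal h₀ h₁ h₂ h₃
  exact ⟨by linarith, by linarith, by linarith⟩

end ModuleR

/-- for `n ≥ 2` and `i ∈ {0,…,n-2}`, the stability space of the
projective-injective `B(n)`-module `R(i)` — the representation with `k` at the
vertices `i` and `i+2`, `k²` at vertex `i+1`, `0` elsewhere, with
`α i = β (i+1) = [1 0]` and `β i = α (i+1) = [0 1]ᵀ` — equals
`{v ∈ ℝ^{n+1} : v i = v (i+1) = v (i+2) = 0}`.  In particular it has
codimension 3 (dimension `n-2`) and is not a wall (its dimension is not `n`). -/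
theorem stmt_16 (k : Type*) [Field k] (n i : ℕ) (hi : i + 2 ≤ n)
    (M : QRep k n)
    (hd : ∀ j, M.d j = if j = i + 1 then 2 else if j = i ∨ j = i + 2 then 1 else 0)
    (hα : ∀ j (x : Fin (M.d (j + 1)) → k) (r : Fin (M.d j)), M.α j x r =
      ∑ c : Fin (M.d (j + 1)),
        (if (j = i ∧ r.val = 0 ∧ c.val = 0) ∨ (j = i + 1 ∧ r.val = 1 ∧ c.val = 0)
          then (1 : k) else 0) * x c)
    (hβ : ∀ j (x : Fin (M.d j) → k) (r : Fin (M.d (j + 1))), M.β j x r =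
      ∑ c : Fin (M.d j),
        (if (j = i ∧ r.val = 1 ∧ c.val = 0) ∨ (j = i + 1 ∧ r.val = 0 ∧ c.val = 0)
          then (1 : k) else 0) * x c) :
    StabSpace M =
      {v : Fin (n + 1) → ℝ | v ⟨i, by omega⟩ = 0 ∧ v ⟨i + 1, by omega⟩ = 0 ∧
        v ⟨i + 2, by omega⟩ = 0} ∧
    ∃ S : Submodule ℝ (Fin (n + 1) → ℝ),
      (S : Set (Fin (n + 1) → ℝ)) = StabSpace M ∧
      Module.finrank ℝ S = n - 2 ∧ Module.finrank ℝ S ≠ n := by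
  have hset : StabSpace M = {v : Fin (n + 1) → ℝ | v ⟨i, by omega⟩ = 0 ∧
      v ⟨i + 1, by omega⟩ = 0 ∧ v ⟨i + 2, by omega⟩ = 0} :=
    Set.ext fun v => ⟨eq_zero_on_window_of_mem_stabSpace hα hβ hd hi,
      mem_stabSpace_of_eq_zero_on_window hi fun j => d_eq_zero_of_lt_or_gt hd⟩
  refine ⟨hset, LinearMap.ker (LinearMap.funLeft ℝ ℝ (window i hi)), ?_, ?_, ?_⟩
  · rw [hset]
    exact Set.ext (mem_ker_funLeft_window_iff hi)
  all_goals
    rw [LinearMap.finrank_ker_funLeft_of_injective _ (window_injective hi), Fintype.card_fin,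
      Fintype.card_fin]
    omega
end
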